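/- Assume R is of type D_n (n ≥ 4), E_6, E_7 or E_8, and let α_r be the unique simple root such that α_0 = ω_r (namely r = 2 in types D_n and E_6, r = 1 in type E_7, and r = 8 in type E_8). Then w_{0, S∖{α_r}}(α_r) = α_0 − α_r. -/

import Mathlib

noncomputable section

open scoped Classical

local notation "⟪" x ", " y "⟫" => @inner ℝ _ _ x y

namespace PaperFormal

variable (V : Type*) [NormedAddCommGroup V] [InnerProductSpace ℝ V] [FiniteDimensional ℝ V]

/-- The reflection of the Euclidean space `V` in the hyperplane orthogonal to `v`,
i.e. `β ↦ β - (2⟪β,v⟫/⟪v,v⟫) v`. -/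
def sref (v : V) : V ≃ₗᵢ[ℝ] V := Submodule.reflection (ℝ ∙ v)ᗮ

/-- A reduced irreducible crystallographic root system `R` in the Euclidean space `V`,
together with a fixed base of simple roots `a 1, …, a n`. -/
structure RootSystemWithBase (n : ℕ) : Type _ where
  /-- the set of roots -/
  R : Set V
  /-- the simple roots `a 1, …, a n` (values outside `{1, …, n}` are irrelevant) -/
  a : ℕ → V
  finite : R.Finite
  ne_zero : ∀ β ∈ R, β ≠ 0
  refl_mem : ∀ α ∈ R, ∀ β ∈ R, sref V α β ∈ R
  crystallographic : ∀ α ∈ R, ∀ β ∈ R, ∃ k : ℤ, 2 * ⟪β, α⟫ / ⟪α, α⟫ = (k : ℝ)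
  reduced : ∀ α ∈ R, ∀ t : ℝ, t • α ∈ R → t = 1 ∨ t = -1
  irreducible : ∀ P : Set V, (∀ x ∈ R, ∀ y ∈ R, x ∈ P → ⟪x, y⟫ ≠ 0 → y ∈ P) →
      (R ∩ P).Nonempty → R ⊆ P
  simple_mem : ∀ i ∈ Finset.Icc 1 n, a i ∈ R
  indep : LinearIndependent ℝ (fun i : (Set.Icc 1 n : Set ℕ) => a i)
  span_top : Submodule.span ℝ (a '' Set.Icc 1 n) = ⊤
  root_combo : ∀ β ∈ R, ∃ c : ℕ → ℤ, ((∀ i, 0 ≤ c i) ∨ (∀ i, c i ≤ 0)) ∧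
      β = ∑ i ∈ Finset.Icc 1 n, (c i : ℝ) • a i

namespace RootSystemWithBase

variable {V} {n : ℕ} (S : RootSystemWithBase V n)

/-- The simple reflection `s i` associated to the simple root `a i`. -/
def s (i : ℕ) : V ≃ₗᵢ[ℝ] V := sref V (S.a i)

/-- The product of the simple reflections along a list of indices
(leftmost factor acting last). -/
def prodW (l : List ℕ) : V ≃ₗᵢ[ℝ] V := (l.map S.s).prod

/-- The parabolic subgroup `W_J` of the Weyl group generated by the simple reflections
`s i` for `i ∈ J`. -/
def WJ (J : Set ℕ) : Subgroup (V ≃ₗᵢ[ℝ] V) :=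
  Subgroup.closure (S.s '' (J ∩ Set.Icc 1 n))

/-- The Weyl group `W`, generated by all simple reflections. -/
def W : Subgroup (V ≃ₗᵢ[ℝ] V) := S.WJ Set.univ

/-- The length of `w` with respect to the simple reflections indexed by `J`:
the least length of a word in these reflections expressing `w`. -/
def lenJ (J : Set ℕ) (w : V ≃ₗᵢ[ℝ] V) : ℕ :=
  sInf {k | ∃ l : List ℕ, (∀ i ∈ l, i ∈ J ∩ Set.Icc 1 n) ∧ l.length = k ∧ w = S.prodW l}

/-- The length function `ℓ` of the Weyl group. -/
def len (w : V ≃ₗᵢ[ℝ] V) : ℕ := S.lenJ Set.univ w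

/-- `w` is the longest element `w_{0,J}` of the parabolic subgroup `W_J`. -/
def IsLongest (J : Set ℕ) (w : V ≃ₗᵢ[ℝ] V) : Prop :=
  w ∈ S.WJ J ∧ ∀ x ∈ S.WJ J, S.lenJ J x ≤ S.lenJ J w

/-- `β` is a positive root (with respect to the base `a`). -/
def IsPos (β : V) : Prop :=
  β ∈ S.R ∧ ∃ c : ℕ → ℝ, (∀ i, 0 ≤ c i) ∧ β = ∑ i ∈ Finset.Icc 1 n, c i • S.a i

/-- `β` is a negative root. -/
def IsNeg (β : V) : Prop := S.IsPos (-β)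

/-- `h` is the highest root `α_0`: a root such that `h - β` is a nonnegative combination of
the simple roots for every root `β`. -/
def IsHighest (h : V) : Prop :=
  h ∈ S.R ∧ ∀ β ∈ S.R, ∃ c : ℕ → ℝ, (∀ i, 0 ≤ c i) ∧
    h - β = ∑ i ∈ Finset.Icc 1 n, c i • S.a i

/-- The root system is simply laced: all roots have the same length. -/
def SimplyLaced : Prop := ∀ α ∈ S.R, ∀ β ∈ S.R, ⟪α, α⟫ = ⟪β, β⟫

/-- `ω` is the fundamental weight `ω_r` dual to the simple root `a r`:
`⟨ω, a j⟩ = δ_{rj}` for `1 ≤ j ≤ n`. -/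
def IsFundamental (r : ℕ) (ω : V) : Prop :=
  ∀ j ∈ Finset.Icc 1 n, 2 * ⟪ω, S.a j⟫ / ⟪S.a j, S.a j⟫ = if j = r then 1 else 0

/-- A weight `ω` is minuscule: `⟨ω, β⟩ ≤ 1` for every positive root `β`. -/
def Minuscule (ω : V) : Prop := ∀ β, S.IsPos β → 2 * ⟪ω, β⟫ / ⟪β, β⟫ ≤ 1

end RootSystemWithBase

end PaperFormal

/-!
Let `w₀` be the longest element of `W_J`, `J = S ∖ {α_r}`, and `β = w₀ α_r`. The reflections
`s_j`, `j ∈ J`, fix `α₀ = ω_r`, hence so does `w₀`; so `(β, α₀) = (α_r, α₀)` and the expansion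
`α₀ - β = ∑ c_i α_i` (`c_i ≥ 0`) has `c_r = 1`. For `j ∈ J` the root `w₀⁻¹ α_j` is negative and
orthogonal to `ω_r`, so it is a nonpositive combination of the `α_k`, `k ≠ r`; as distinct simple
roots make obtuse angles, `(β, α_j) = (α_r, w₀⁻¹ α_j) ≥ 0`. Pairing `α₀ - β - α_r` with `β` gives
`(β, α₀ - α_r) ≥ (β, β)`. Both `β` and `α₀ - α_r = s_r α₀` are roots of the common length, so
they are equal.
-/

namespace PaperFormal

variable {V : Type*} [NormedAddCommGroup V] [InnerProductSpace ℝ V]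

theorem sref_apply (v x : V) : sref V v x = x - (2 * ⟪x, v⟫ / ⟪v, v⟫) • v := by
  rw [sref, Submodule.reflection_orthogonal_apply, Submodule.reflection_singleton_apply,
    real_inner_self_eq_norm_sq, real_inner_comm]
  simp only [RCLike.ofReal_real_eq_id, id_eq]
  module

theorem sref_apply_self (v : V) : sref V v v = -v :=
  Submodule.reflection_orthogonalComplement_singleton_eq_neg v

theorem conj_sref (g : V ≃ₗᵢ[ℝ] V) (v : V) : g * sref V v * g⁻¹ = sref V (g v) := by
  ext x
  change g (sref V v (g.symm x)) = _
  rw [sref_apply, sref_apply, map_sub, map_smul, g.apply_symm_apply,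
    ← g.inner_map_map (g.symm x), g.apply_symm_apply, g.inner_map_map]

theorem eq_of_inner_self_eq_of_inner_self_le {x y : V} (hxy : ⟪x, x⟫ = ⟪y, y⟫)
    (h : ⟪y, y⟫ ≤ ⟪x, y⟫) : x = y := by
  have hle : ⟪x - y, x - y⟫ ≤ 0 := by rw [real_inner_sub_sub_self]; linarith
  exact sub_eq_zero.mp (inner_self_eq_zero.mp (le_antisymm hle real_inner_self_nonneg))

namespace RootSystemWithBase

variable {n : ℕ} (S : RootSystemWithBase V n)

theorem linearIndepOn_a : LinearIndepOn ℝ S.a (Finset.Icc 1 n : Set ℕ) := by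
  rw [Finset.coe_Icc]
  exact S.indep

theorem coeff_eq_of_sum_eq {c d : ℕ → ℝ}
    (h : ∑ i ∈ Finset.Icc 1 n, c i • S.a i = ∑ i ∈ Finset.Icc 1 n, d i • S.a i) :
    ∀ i ∈ Finset.Icc 1 n, c i = d i := by
  intro i hi
  refine sub_eq_zero.mp
    (linearIndepOn_finset_iff.mp S.linearIndepOn_a (fun j => c j - d j) ?_ i hi)
  simp only [sub_smul, Finset.sum_sub_distrib, h, sub_self]

theorem sum_ite_smul_a {i : ℕ} (hi : i ∈ Finset.Icc 1 n) (t : ℝ) :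
    ∑ j ∈ Finset.Icc 1 n, (if j = i then t else 0) • S.a j = t • S.a i := by
  simp only [ite_smul, zero_smul, Finset.sum_ite_eq', hi, if_true]

theorem neg_mem {β : V} (hβ : β ∈ S.R) : -β ∈ S.R := by
  simpa only [sref_apply_self] using S.refl_mem β hβ β hβ

theorem inner_self_pos {β : V} (hβ : β ∈ S.R) : 0 < ⟪β, β⟫ :=
  real_inner_self_pos.mpr (S.ne_zero β hβ)

theorem isPos_a {i : ℕ} (hi : i ∈ Finset.Icc 1 n) : S.IsPos (S.a i) :=
  ⟨S.simple_mem i hi, fun j => if j = i then 1 else 0, fun j => ite_nonneg zero_le_one le_rfl,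
    by rw [S.sum_ite_smul_a hi, one_smul]⟩

theorem isPos_or_isNeg {β : V} (hβ : β ∈ S.R) : S.IsPos β ∨ S.IsNeg β := by
  obtain ⟨c, hc | hc, hrep⟩ := S.root_combo β hβ
  · exact Or.inl ⟨hβ, fun i => c i, fun i => Int.cast_nonneg (hc i), hrep⟩
  · refine Or.inr ⟨S.neg_mem hβ, fun i => -c i, fun i => by simpa using hc i, ?_⟩
    simp only [hrep, neg_smul, Finset.sum_neg_distrib]

theorem not_isPos_and_isNeg {β : V} (hpos : S.IsPos β) (hneg : S.IsNeg β) : False := by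
  obtain ⟨hβ, c, hc, rfl⟩ := hpos
  obtain ⟨-, d, hd, hdrep⟩ := hneg
  have hzero : ∑ i ∈ Finset.Icc 1 n, (c i + d i) • S.a i = 0 := by
    simp only [add_smul, Finset.sum_add_distrib, ← hdrep, add_neg_cancel]
  have hc0 : ∀ i ∈ Finset.Icc 1 n, c i = 0 := fun i hi => by
    have := linearIndepOn_finset_iff.mp S.linearIndepOn_a _ hzero i hi
    linarith [hc i, hd i]
  exact S.ne_zero _ hβ (Finset.sum_eq_zero fun i hi => by rw [hc0 i hi, zero_smul])

/-- A root cannot have coefficients of both signs. -/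
theorem sub_smul_a_not_mem {i k : ℕ} (hi : i ∈ Finset.Icc 1 n) (hk : k ∈ Finset.Icc 1 n)
    (hik : i ≠ k) {t : ℝ} (ht : 0 < t) : S.a i - t • S.a k ∉ S.R := by
  intro hmem
  obtain ⟨c, hsign, hrep⟩ := S.root_combo _ hmem
  have hcoeff := S.coeff_eq_of_sum_eq (c := fun j => c j)
    (d := fun j => (if j = i then 1 else 0) - if j = k then t else 0) (by
      simp only [sub_smul, Finset.sum_sub_distrib, S.sum_ite_smul_a hi, S.sum_ite_smul_a hk,
        one_smul, ← hrep])
  have hci : (c i : ℝ) = 1 := by simpa [hik] using hcoeff i hi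
  have hck : (c k : ℝ) = -t := by simpa [Ne.symm hik] using hcoeff k hk
  rcases hsign with h | h
  · have : (0 : ℝ) ≤ c k := by exact_mod_cast h k
    linarith
  · have : (c i : ℝ) ≤ 0 := by exact_mod_cast h i
    linarith

theorem inner_a_nonpos {i k : ℕ} (hi : i ∈ Finset.Icc 1 n) (hk : k ∈ Finset.Icc 1 n)
    (hik : i ≠ k) : ⟪S.a i, S.a k⟫ ≤ 0 := by
  by_contra! hpos
  have hmem := S.refl_mem _ (S.simple_mem k hk) _ (S.simple_mem i hi)
  rw [sref_apply] at hmem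
  exact S.sub_smul_a_not_mem hi hk hik
    (div_pos (mul_pos two_pos hpos) (S.inner_self_pos (S.simple_mem k hk))) hmem

theorem s_mul_self (i : ℕ) : S.s i * S.s i = 1 := Submodule.reflection_mul_reflection _

theorem s_inv (i : ℕ) : (S.s i)⁻¹ = S.s i := Submodule.reflection_inv

theorem s_apply_a_self (i : ℕ) : S.s i (S.a i) = -S.a i := sref_apply_self _

theorem prodW_cons (i : ℕ) (l : List ℕ) : S.prodW (i :: l) = S.s i * S.prodW l := by
  simp [prodW]

theorem prodW_append (l₁ l₂ : List ℕ) : S.prodW (l₁ ++ l₂) = S.prodW l₁ * S.prodW l₂ := by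
  simp [prodW]

theorem prodW_reverse (l : List ℕ) : S.prodW l.reverse = (S.prodW l)⁻¹ := by
  induction l with
  | nil => simp [prodW]
  | cons i t ih =>
    rw [List.reverse_cons, prodW_append, ih, S.prodW_cons i t, mul_inv_rev, s_inv]
    simp [prodW]

theorem prodW_apply_mem {l : List ℕ} (hl : ∀ i ∈ l, i ∈ Set.Icc 1 n) {β : V} (hβ : β ∈ S.R) :
    S.prodW l β ∈ S.R := by
  induction l with
  | nil => simpa [prodW] using hβ
  | cons i t ih =>
    rw [prodW_cons]
    exact S.refl_mem _ (S.simple_mem i (by simpa using hl i List.mem_cons_self)) _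
      (ih fun j hj => hl j (List.mem_cons_of_mem _ hj))

variable {J : Set ℕ}

theorem exists_prodW_eq_of_mem_WJ {w : V ≃ₗᵢ[ℝ] V} (hw : w ∈ S.WJ J) :
    ∃ l : List ℕ, (∀ i ∈ l, i ∈ J ∩ Set.Icc 1 n) ∧ w = S.prodW l := by
  induction hw using Subgroup.closure_induction with
  | mem x hx =>
    obtain ⟨i, hi, rfl⟩ := hx
    exact ⟨[i], by simpa using hi, by simp [prodW]⟩
  | one => exact ⟨[], by simp, by simp [prodW]⟩
  | mul x y _ _ ihx ihy =>
    obtain ⟨l₁, h₁, rfl⟩ := ihx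
    obtain ⟨l₂, h₂, rfl⟩ := ihy
    refine ⟨l₁ ++ l₂, fun i hi => ?_, (S.prodW_append l₁ l₂).symm⟩
    rcases List.mem_append.mp hi with h | h
    exacts [h₁ i h, h₂ i h]
  | inv x _ ihx =>
    obtain ⟨l, hl, rfl⟩ := ihx
    exact ⟨l.reverse, fun i hi => hl i (List.mem_reverse.mp hi), (S.prodW_reverse l).symm⟩

theorem apply_mem_of_mem_WJ {w : V ≃ₗᵢ[ℝ] V} (hw : w ∈ S.WJ J) {β : V} (hβ : β ∈ S.R) :
    w β ∈ S.R := by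
  obtain ⟨l, hl, rfl⟩ := S.exists_prodW_eq_of_mem_WJ hw
  exact S.prodW_apply_mem (fun i hi => (hl i hi).2) hβ

theorem lenJ_le_length {w : V ≃ₗᵢ[ℝ] V} {l : List ℕ} (hl : ∀ i ∈ l, i ∈ J ∩ Set.Icc 1 n)
    (hw : w = S.prodW l) : S.lenJ J w ≤ l.length :=
  Nat.sInf_le ⟨l, hl, rfl, hw⟩

theorem exists_prodW_eq_of_length_eq_lenJ {w : V ≃ₗᵢ[ℝ] V} (hw : w ∈ S.WJ J) :
    ∃ l : List ℕ, (∀ i ∈ l, i ∈ J ∩ Set.Icc 1 n) ∧ l.length = S.lenJ J w ∧ w = S.prodW l := by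
  obtain ⟨l, hl, hwl⟩ := S.exists_prodW_eq_of_mem_WJ hw
  exact Nat.sInf_mem (s := {k | ∃ l : List ℕ, (∀ i ∈ l, i ∈ J ∩ Set.Icc 1 n) ∧ l.length = k ∧
    w = S.prodW l}) ⟨l.length, l, hl, rfl, hwl⟩

theorem lenJ_inv_le {w : V ≃ₗᵢ[ℝ] V} (hw : w ∈ S.WJ J) : S.lenJ J w⁻¹ ≤ S.lenJ J w := by
  obtain ⟨l, hl, hlen, rfl⟩ := S.exists_prodW_eq_of_length_eq_lenJ hw
  rw [← hlen, ← List.length_reverse]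
  exact S.lenJ_le_length (fun i hi => hl i (List.mem_reverse.mp hi)) (S.prodW_reverse l).symm

theorem isLongest_inv {w : V ≃ₗᵢ[ℝ] V} (hw : S.IsLongest J w) : S.IsLongest J w⁻¹ := by
  refine ⟨inv_mem hw.1, fun x hx => (hw.2 x hx).trans ?_⟩
  simpa only [inv_inv] using S.lenJ_inv_le (inv_mem hw.1)

theorem eq_a_of_isPos_of_isNeg_s {i : ℕ} (hi : i ∈ Finset.Icc 1 n) {β : V} (hpos : S.IsPos β)
    (hneg : S.IsNeg (S.s i β)) : β = S.a i := by
  obtain ⟨hβ, c, hc, hcrep⟩ := hpos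
  obtain ⟨-, d, hd, hdrep⟩ := hneg
  set k := 2 * ⟪β, S.a i⟫ / ⟪S.a i, S.a i⟫
  have hsum : ∑ j ∈ Finset.Icc 1 n, (c j + d j) • S.a j
      = ∑ j ∈ Finset.Icc 1 n, (if j = i then k else 0) • S.a j := by
    rw [S.sum_ite_smul_a hi]
    simp only [add_smul, Finset.sum_add_distrib, ← hcrep, ← hdrep, s, sref_apply]
    abel
  have hc0 : ∀ j ∈ Finset.Icc 1 n, j ≠ i → c j = 0 := fun j hj hji => by
    have := S.coeff_eq_of_sum_eq hsum j hj
    rw [if_neg hji] at this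
    linarith [hc j, hd j]
  have hβi : β = c i • S.a i := by
    rw [hcrep, Finset.sum_eq_single i (fun j hj hji => by rw [hc0 j hj hji, zero_smul])
      (absurd hi)]
  rcases S.reduced _ (S.simple_mem i hi) (c i) (hβi ▸ hβ) with h | h
  · rw [hβi, h, one_smul]
  · linarith [hc i]

theorem exists_prodW_mul_s_eq_of_isNeg {j : ℕ} (hj : j ∈ Finset.Icc 1 n) {l : List ℕ}
    (hl : ∀ i ∈ l, i ∈ J ∩ Set.Icc 1 n) (hneg : S.IsNeg (S.prodW l (S.a j))) :
    ∃ l' : List ℕ, (∀ i ∈ l', i ∈ J ∩ Set.Icc 1 n) ∧ l'.length + 1 = l.length ∧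
      S.prodW l * S.s j = S.prodW l' := by
  induction l with
  | nil => exact (S.not_isPos_and_isNeg (S.isPos_a hj) (by simpa [prodW] using hneg)).elim
  | cons i t ih =>
    rw [List.forall_mem_cons] at hl
    rw [prodW_cons] at hneg
    rcases S.isPos_or_isNeg (S.prodW_apply_mem (fun k hk => (hl.2 k hk).2)
      (S.simple_mem j hj)) with hpos | hneg'
    · -- `prodW t` carries `a j` to `a i`, so it conjugates `s j` into `s i`
      have heq := S.eq_a_of_isPos_of_isNeg_s (by simpa using hl.1.2) hpos hneg
      have hconj : S.prodW t * S.s j * (S.prodW t)⁻¹ = S.s i := by rw [s, conj_sref, heq]; rfl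
      refine ⟨t, hl.2, rfl, ?_⟩
      rw [prodW_cons, ← hconj, inv_mul_cancel_right, mul_assoc, s_mul_self, mul_one]
    · obtain ⟨t', ht', hlen, heq⟩ := ih hl.2 hneg'
      refine ⟨i :: t', List.forall_mem_cons.mpr ⟨hl.1, ht'⟩, by simpa using hlen, ?_⟩
      rw [prodW_cons, prodW_cons, mul_assoc, heq]

theorem lenJ_mul_s_lt_of_isNeg {j : ℕ} (hj : j ∈ Finset.Icc 1 n) {w : V ≃ₗᵢ[ℝ] V}
    (hw : w ∈ S.WJ J) (hneg : S.IsNeg (w (S.a j))) : S.lenJ J (w * S.s j) < S.lenJ J w := by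
  obtain ⟨l, hl, hlen, rfl⟩ := S.exists_prodW_eq_of_length_eq_lenJ hw
  obtain ⟨l', hl', hlen', heq⟩ := S.exists_prodW_mul_s_eq_of_isNeg hj hl hneg
  have := S.lenJ_le_length hl' heq
  omega

theorem isNeg_apply_a_of_isLongest {j : ℕ} (hj : j ∈ J ∩ Set.Icc 1 n) {w : V ≃ₗᵢ[ℝ] V}
    (hw : S.IsLongest J w) : S.IsNeg (w (S.a j)) := by
  have hjI : j ∈ Finset.Icc 1 n := by simpa using hj.2
  refine (S.isPos_or_isNeg (S.apply_mem_of_mem_WJ hw.1 (S.simple_mem j hjI))).resolve_left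
    fun hpos => ?_
  have hws : w * S.s j ∈ S.WJ J := mul_mem hw.1 (Subgroup.subset_closure ⟨j, hj, rfl⟩)
  have hlt := S.lenJ_mul_s_lt_of_isNeg hjI hws (by
    change S.IsPos (-(w (S.s j (S.a j))))
    rwa [s_apply_a_self, map_neg, neg_neg])
  rw [mul_assoc, s_mul_self, mul_one] at hlt
  exact (hw.2 _ hws).not_gt hlt

variable {r : ℕ} {ω : V}

theorem inner_a_of_isFundamental (hω : S.IsFundamental r ω) {j : ℕ} (hj : j ∈ Finset.Icc 1 n) :
    ⟪ω, S.a j⟫ = if j = r then ⟪S.a r, S.a r⟫ / 2 else 0 := by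
  have h := hω j hj
  rw [div_eq_iff (S.inner_self_pos (S.simple_mem j hj)).ne'] at h
  split_ifs at h ⊢ with hjr
  · subst hjr
    linarith
  · linarith

theorem inner_sum_of_isFundamental (hω : S.IsFundamental r ω) (hr : r ∈ Finset.Icc 1 n)
    (d : ℕ → ℝ) : ⟪∑ i ∈ Finset.Icc 1 n, d i • S.a i, ω⟫ = d r * (⟪S.a r, S.a r⟫ / 2) := by
  rw [sum_inner, Finset.sum_congr rfl fun i hi => by
    rw [real_inner_smul_left, real_inner_comm, S.inner_a_of_isFundamental hω hi, mul_ite,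
      mul_zero]]
  simp [hr]

theorem s_apply_of_isFundamental (hω : S.IsFundamental r ω) (hr : r ∈ Finset.Icc 1 n) :
    S.s r ω = ω - S.a r := by
  rw [s, sref_apply, hω r hr, if_pos rfl, one_smul]

theorem apply_eq_of_isFundamental_of_mem_WJ (hω : S.IsFundamental r ω) {w : V ≃ₗᵢ[ℝ] V}
    (hw : w ∈ S.WJ (Set.Icc 1 n \ {r})) : w ω = ω := by
  induction hw using Subgroup.closure_induction with
  | mem x hx =>
    obtain ⟨i, ⟨⟨-, hir⟩, hi⟩, rfl⟩ := hx
    have h := hω i (by simpa using hi)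
    rw [if_neg (show i ≠ r from hir)] at h
    rw [s, sref_apply, h, zero_smul, sub_zero]
  | one => rfl
  | mul x y _ _ ihx ihy =>
    change x (y ω) = ω
    rw [ihy, ihx]
  | inv x _ ihx => exact x.symm_apply_eq.mpr ihx.symm

theorem inner_apply_a_nonneg_of_isLongest (hω : S.IsFundamental r ω) (hr : r ∈ Finset.Icc 1 n)
    {w : V ≃ₗᵢ[ℝ] V} (hw : S.IsLongest (Set.Icc 1 n \ {r}) w) {i : ℕ}
    (hi : i ∈ Finset.Icc 1 n) (hir : i ≠ r) : 0 ≤ ⟪w (S.a r), S.a i⟫ := by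
  have hiS : i ∈ Set.Icc 1 n := by simpa using hi
  have hiJ : i ∈ (Set.Icc 1 n \ {r}) ∩ Set.Icc 1 n := ⟨⟨hiS, hir⟩, hiS⟩
  obtain ⟨-, d, hd, hdrep⟩ := S.isNeg_apply_a_of_isLongest hiJ (S.isLongest_inv hw)
  have hdr : d r = 0 := by
    have h := S.inner_sum_of_isFundamental hω hr d
    rw [← hdrep, inner_neg_left, ← S.apply_eq_of_isFundamental_of_mem_WJ hω (inv_mem hw.1),
      LinearIsometryEquiv.inner_map_map, real_inner_comm, S.inner_a_of_isFundamental hω hi,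
      if_neg hir, neg_zero] at h
    exact (mul_eq_zero.mp h.symm).resolve_right
      (half_pos (S.inner_self_pos (S.simple_mem r hr))).ne'
  have h : ⟪w (S.a r), S.a i⟫ = ⟪S.a r, w⁻¹ (S.a i)⟫ := by
    rw [← w.inner_map_map (S.a r)]
    exact congrArg _ (w.apply_symm_apply _).symm
  rw [h, ← neg_neg (w⁻¹ (S.a i)), hdrep, inner_neg_right, inner_sum, neg_nonneg]
  refine Finset.sum_nonpos fun k hk => ?_
  rw [real_inner_smul_right]
  rcases eq_or_ne k r with rfl | hkr
  · rw [hdr, zero_mul]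
  · exact mul_nonpos_of_nonneg_of_nonpos (hd k) (S.inner_a_nonpos hr hk hkr.symm)

end RootSystemWithBase

variable [FiniteDimensional ℝ V]

/-- Assume `R` is of type `D_n` (`n ≥ 4`), `E_6`, `E_7` or `E_8` — i.e. `R`
is (irreducible and) simply laced and its highest root `α_0` equals a fundamental weight —
and let `α_r` be the unique simple root such that `α_0 = ω_r`.  Then
`w_{0, S∖{α_r}}(α_r) = α_0 - α_r`. -/
theorem statement5 {n : ℕ} (S : RootSystemWithBase V n) (hsl : S.SimplyLaced)
    (r : ℕ) (hr : r ∈ Finset.Icc 1 n) (α0 : V) (hα0 : S.IsHighest α0)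
    (hfund : S.IsFundamental r α0)
    (w0J : V ≃ₗᵢ[ℝ] V) (hw0J : S.IsLongest (Set.Icc 1 n \ {r}) w0J) :
    w0J (S.a r) = α0 - S.a r := by
  have hα0R : α0 ∈ S.R := hα0.1
  have harR : S.a r ∈ S.R := S.simple_mem r hr
  have hδR : α0 - S.a r ∈ S.R := S.s_apply_of_isFundamental hfund hr ▸ S.refl_mem _ harR _ hα0R
  set β := w0J (S.a r)
  have hββ : ⟪β, β⟫ = ⟪α0, α0⟫ := by rw [w0J.inner_map_map, hsl _ harR _ hα0R]
  have hβα0 : ⟪β, α0⟫ = ⟪α0, α0⟫ / 2 := by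
    conv_lhs => rw [← S.apply_eq_of_isFundamental_of_mem_WJ hfund hw0J.1]
    rw [w0J.inner_map_map, real_inner_comm, S.inner_a_of_isFundamental hfund hr, if_pos rfl,
      hsl _ harR _ hα0R]
  obtain ⟨c, hc, hcrep⟩ := hα0.2 β (S.apply_mem_of_mem_WJ hw0J.1 harR)
  have hcr : c r = 1 := by
    have h := S.inner_sum_of_isFundamental hfund hr c
    rw [← hcrep, inner_sub_left, hβα0, hsl _ harR _ hα0R] at h
    have hN := S.inner_self_pos hα0R
    nlinarith
  have hle : ⟪β, S.a r⟫ ≤ ⟪β, α0 - β⟫ := by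
    rw [hcrep, inner_sum, ← Finset.add_sum_erase _ _ hr, real_inner_smul_right, hcr, one_mul,
      le_add_iff_nonneg_right]
    refine Finset.sum_nonneg fun i hi => ?_
    rw [real_inner_smul_right]
    exact mul_nonneg (hc i) (S.inner_apply_a_nonneg_of_isLongest hfund hr hw0J
      (Finset.mem_of_mem_erase hi) (Finset.ne_of_mem_erase hi))
  refine eq_of_inner_self_eq_of_inner_self_le (hββ.trans (hsl _ hα0R _ hδR)) ?_
  rw [← hsl _ hα0R _ hδR, inner_sub_right]
  rw [inner_sub_right] at hle
  linarith

end PaperFormal
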